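/- Every 7-dimensional naturally graded quasi-filiform complex Zinbiel algebra of type A_(3) is isomorphic to the algebra with basis e_1, …, e_7 and products e_1∘e_2 = e_3, e_1∘e_3 = e_4, e_1∘e_5 = e_6, e_1∘e_6 = e_7, e_2∘e_1 = −e_3, e_2∘e_3 = e_5, e_2∘e_4 = −e_6, e_3∘e_3 = e_6, e_4∘e_2 = e_6, e_4∘e_3 = 2e_7, e_5∘e_1 = −e_6, all other products of basis vectors being zero. -/

import Mathlib

/-!
The grading is generated in degree one (`A_{k+1} = A_1 ∘ A_k`), so the graded pieces have
dimensions `2, 1, 2, 1, 1`. As `A_2` is a line and `A_3` is not, the product is anticommutative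
on `A_1`; as `x ↦ x ∘ A_4` maps `A_1` onto the line `A_5`, `A_1` has a basis `u, v` with
`v ∘ A_4 = 0`. The vectors `u, v, u∘v, u∘(u∘v), v∘(u∘v), u∘(v∘(u∘v)), u∘(u∘(v∘(u∘v)))` then
satisfy the model table: in total degree at most five each entry is one instance of the Zinbiel
identity, the other products vanish for degree reasons. Their span is a subalgebra containing
`A_1`, hence all of `A`, so they form a basis.
-/

/-- A complex Zinbiel algebra structure on the module `A`: a bilinear
multiplication satisfying `(x∘y)∘z = x∘(y∘z) + x∘(z∘y)`. -/
structure ZinbielStr (A : Type*) [AddCommGroup A] [Module ℂ A] where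
  mul : A →ₗ[ℂ] A →ₗ[ℂ] A
  zinbiel : ∀ x y z : A, mul (mul x y) z = mul x (mul y z) + mul x (mul z y)

namespace ZinbielStr

variable {A : Type*} [AddCommGroup A] [Module ℂ A]

/-- `M.lcs k` is the term `A^k` of the lower central series for `k ≥ 1`
(`A^1 = A`, `A^{k+1} = span (A ∘ A^k)`), with the convention `M.lcs 0 = ⊤`. -/
def lcs (M : ZinbielStr A) : ℕ → Submodule ℂ A
  | 0 => ⊤
  | 1 => ⊤
  | k + 2 => Submodule.span ℂ {z | ∃ a b, b ∈ lcs M (k + 1) ∧ z = M.mul a b}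

/-- A Zinbiel algebra is nilpotent when some term of the lower central series vanishes. -/
def IsNilpotent (M : ZinbielStr A) : Prop := ∃ s, 1 ≤ s ∧ M.lcs s = ⊥

/-- `Ag` is a natural grading of `M` with parts `Ag 1, …, Ag t`:
the parts are independent, `A_i ∘ A_j ⊆ A_{i+j}` (with `A_k = 0` for `k > t` and `k = 0`),
and `A^k = A_k ⊕ A_{k+1} ⊕ ⋯ ⊕ A_t` for all `1 ≤ k ≤ t`. -/
structure IsNaturalGrading (M : ZinbielStr A) (t : ℕ) (Ag : ℕ → Submodule ℂ A) : Prop where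
  zero_deg : Ag 0 = ⊥
  high_deg : ∀ k, t < k → Ag k = ⊥
  indep : iSupIndep Ag
  mul_mem : ∀ i j x y, x ∈ Ag i → y ∈ Ag j → M.mul x y ∈ Ag (i + j)
  lcs_eq : ∀ k, 1 ≤ k → k ≤ t → M.lcs k = ⨆ j, ⨆ (_ : k ≤ j), Ag j

/-- An `n`-dimensional Zinbiel algebra is quasi-filiform if `A^{n-2} ≠ 0` and `A^{n-1} = 0`. -/
def IsQuasiFiliform (M : ZinbielStr A) (n : ℕ) : Prop :=
  Module.finrank ℂ A = n ∧ M.lcs (n - 2) ≠ ⊥ ∧ M.lcs (n - 1) = ⊥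

end ZinbielStr

open Module Submodule

section LinearAlgebra

variable {K V W : Type*} [DivisionRing K] [AddCommGroup V] [Module K V] [AddCommGroup W]
  [Module K W]

lemma finrank_span_singleton_le_one (v : V) : finrank K (K ∙ v) ≤ 1 := by
  simpa using finrank_span_le_card (R := K) ({v} : Set V)

lemma le_span_singleton_of_finrank_le_one [FiniteDimensional K V] {S : Submodule K V}
    (hS : finrank K S ≤ 1) {v : V} (hv : v ∈ S) (hv₀ : v ≠ 0) : S ≤ K ∙ v :=
  (eq_of_le_of_finrank_le ((span_singleton_le_iff_mem v S).2 hv)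
    (hS.trans (finrank_span_singleton hv₀).ge)).ge

lemma exists_le_span_pair_of_finrank_eq_two [FiniteDimensional K V] {S : Submodule K V}
    (hS : finrank K S = 2) {v : V} (hv : v ∈ S) (hv₀ : v ≠ 0) : ∃ u ∈ S, S ≤ span K {u, v} := by
  have hvS : K ∙ v < S := lt_of_le_of_ne ((span_singleton_le_iff_mem v S).2 hv) fun h => by
    rw [← h, finrank_span_singleton hv₀] at hS
    omega
  obtain ⟨u, huS, hu⟩ := SetLike.exists_of_lt hvS
  have huv : K ∙ v < span K {u, v} :=
    SetLike.lt_iff_le_and_exists.2 ⟨span_mono (by simp), u, subset_span (by simp), hu⟩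
  refine ⟨u, huS, (eq_of_le_of_finrank_le ?_ ?_).ge⟩
  · exact span_le.2 (Set.insert_subset huS (Set.singleton_subset_iff.2 hv))
  · have := finrank_lt_finrank_of_lt huv
    rw [finrank_span_singleton hv₀] at this
    omega

lemma exists_le_span_pair_apply_eq_zero [FiniteDimensional K V] {S : Submodule K V}
    (hS : finrank K S = 2) (f : V →ₗ[K] W) (hf : finrank K (S.map f) ≤ 1) :
    ∃ u ∈ S, ∃ v ∈ S, S ≤ span K {u, v} ∧ f v = 0 := by
  have hker : LinearMap.ker (f.domRestrict S) ≠ ⊥ := by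
    rw [← LinearMap.ker_rangeRestrict]
    exact LinearMap.ker_ne_bot_of_finrank_lt (by rw [LinearMap.range_domRestrict]; omega)
  obtain ⟨⟨v, hvS⟩, hv, hv₀⟩ := exists_mem_ne_zero_of_ne_bot hker
  obtain ⟨u, huS, hspan⟩ := exists_le_span_pair_of_finrank_eq_two hS hvS (by simpa using hv₀)
  exact ⟨u, huS, v, hvS, hspan, hv⟩

end LinearAlgebra

section GradedTail

variable {K V : Type*} [DivisionRing K] [AddCommGroup V] [Module K V] {Ag : ℕ → Submodule K V}

variable (Ag) in
def gradedTail (c : ℕ) : Submodule K V := ⨆ j, ⨆ (_ : c ≤ j), Ag j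

lemma le_gradedTail {c j : ℕ} (h : c ≤ j) : Ag j ≤ gradedTail Ag c :=
  le_iSup₂ (f := fun j (_ : c ≤ j) => Ag j) j h

lemma gradedTail_antitone : Antitone (gradedTail Ag) := fun _ _ h =>
  iSup₂_le fun _ hj => le_gradedTail (h.trans hj)

lemma gradedTail_eq_sup (c : ℕ) : gradedTail Ag c = Ag c ⊔ gradedTail Ag (c + 1) := by
  refine le_antisymm (iSup₂_le fun j hj => ?_)
    (sup_le (le_gradedTail le_rfl) (gradedTail_antitone c.le_succ))
  rcases hj.eq_or_lt with rfl | hlt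
  · exact le_sup_left
  · exact (le_gradedTail hlt).trans le_sup_right

lemma gradedTail_eq_bot {t c : ℕ} (h : ∀ k, t < k → Ag k = ⊥) (hc : t < c) :
    gradedTail Ag c = ⊥ :=
  eq_bot_iff.2 <| iSup₂_le fun j hj => (h j (hc.trans_le hj)).le

lemma iSupIndep.disjoint_gradedTail_succ (h : iSupIndep Ag) (c : ℕ) :
    Disjoint (Ag c) (gradedTail Ag (c + 1)) :=
  (h c).mono_right <| iSup₂_le fun j hj => le_iSup₂ (f := fun j (_ : j ≠ c) => Ag j) j (by omega)

lemma iSupIndep.finrank_gradedTail [FiniteDimensional K V] (h : iSupIndep Ag) (c : ℕ) :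
    finrank K (gradedTail Ag c) = finrank K (Ag c) + finrank K (gradedTail Ag (c + 1)) := by
  rw [← finrank_sup_add_finrank_inf_eq, disjoint_iff.1 (h.disjoint_gradedTail_succ c), finrank_bot,
    add_zero, ← gradedTail_eq_sup]

lemma iSupIndep.finrank_gradedTail_eq_sum [FiniteDimensional K V] (h : iSupIndep Ag) {t : ℕ}
    (ht : ∀ k, t < k → Ag k = ⊥) (c : ℕ) :
    finrank K (gradedTail Ag c) = ∑ k ∈ Finset.Ico c (t + 1), finrank K (Ag k) := by
  obtain ⟨n, hn⟩ : ∃ n, t + 1 - c = n := ⟨_, rfl⟩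
  induction n generalizing c with
  | zero => rw [gradedTail_eq_bot ht (by omega), Finset.Ico_eq_empty (by omega)]; simp
  | succ n ih =>
    rw [Finset.sum_eq_sum_Ico_succ_bot (by omega), h.finrank_gradedTail, ih (c + 1) (by omega)]

end GradedTail

namespace ZinbielStr

variable {A : Type*} [AddCommGroup A] [Module ℂ A] {M : ZinbielStr A} {t : ℕ}
  {Ag : ℕ → Submodule ℂ A}

lemma lcs_add_two_le_map₂ (M : ZinbielStr A) (k : ℕ) :
    M.lcs (k + 2) ≤ map₂ M.mul ⊤ (M.lcs (k + 1)) :=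
  span_le.2 fun _ ⟨_, _, hb, hz⟩ => hz ▸ apply_mem_map₂ _ mem_top hb

lemma mul_mem_span_range {ι : Type*} {e : ι → A}
    (h : ∀ i j, M.mul (e i) (e j) ∈ span ℂ (Set.range e)) {x y : A}
    (hx : x ∈ span ℂ (Set.range e)) (hy : y ∈ span ℂ (Set.range e)) :
    M.mul x y ∈ span ℂ (Set.range e) := by
  have hle : map₂ M.mul (span ℂ (Set.range e)) (span ℂ (Set.range e)) ≤ span ℂ (Set.range e) := by
    rw [map₂_span_span, span_le]
    rintro _ ⟨_, ⟨i, rfl⟩, _, ⟨j, rfl⟩, rfl⟩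
    exact h i j
  exact hle (apply_mem_map₂ _ hx hy)

namespace IsNaturalGrading

lemma lcs_eq_gradedTail (hg : M.IsNaturalGrading t Ag) {k : ℕ} (hk : 1 ≤ k) (hkt : k ≤ t) :
    M.lcs k = gradedTail Ag k :=
  hg.lcs_eq k hk hkt

lemma gradedTail_one (hg : M.IsNaturalGrading t Ag) (ht : 1 ≤ t) : gradedTail Ag 1 = ⊤ :=
  (hg.lcs_eq_gradedTail le_rfl ht).symm

lemma lcs_eq_top_degree (hg : M.IsNaturalGrading t Ag) (ht : 1 ≤ t) : M.lcs t = Ag t := by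
  rw [hg.lcs_eq_gradedTail ht le_rfl, gradedTail_eq_sup,
    gradedTail_eq_bot hg.high_deg t.lt_succ_self, sup_bot_eq]

lemma mul_eq_zero_of_lt (hg : M.IsNaturalGrading t Ag) {i j : ℕ} {x y : A} (hx : x ∈ Ag i)
    (hy : y ∈ Ag j) (h : t < i + j) : M.mul x y = 0 := by
  simpa [hg.high_deg _ h] using hg.mul_mem i j x y hx hy

lemma map₂_le (hg : M.IsNaturalGrading t Ag) (i j : ℕ) : map₂ M.mul (Ag i) (Ag j) ≤ Ag (i + j) :=
  Submodule.map₂_le.2 fun x hx y hy => hg.mul_mem i j x y hx hy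

lemma map₂_gradedTail_le (hg : M.IsNaturalGrading t Ag) (i j : ℕ) :
    map₂ M.mul (gradedTail Ag i) (gradedTail Ag j) ≤ gradedTail Ag (i + j) := by
  simp only [gradedTail, map₂_iSup_left, map₂_iSup_right, iSup_le_iff]
  intro a ha b hb
  exact (hg.map₂_le b a).trans (le_gradedTail (by omega))

/-- Modulo the higher tail, a product `A ∘ A^k` only sees `A_1 ∘ A_k`. -/
lemma map₂_one_eq (hg : M.IsNaturalGrading t Ag) {k : ℕ} (hk : 1 ≤ k) (hkt : k < t) :
    map₂ M.mul (Ag 1) (Ag k) = Ag (k + 1) := by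
  obtain ⟨k, rfl⟩ : ∃ k', k = k' + 1 := ⟨k - 1, by omega⟩
  set X := map₂ M.mul (Ag 1) (Ag (k + 1))
  have hX : X ≤ Ag (k + 2) := (hg.map₂_le 1 (k + 1)).trans_eq (congrArg Ag (by omega))
  have tail : ∀ i j, k + 3 ≤ i + j →
      map₂ M.mul (gradedTail Ag i) (gradedTail Ag j) ≤ gradedTail Ag (k + 3) :=
    fun i j h => (hg.map₂_gradedTail_le i j).trans (gradedTail_antitone h)
  have hle : Ag (k + 2) ≤ X ⊔ gradedTail Ag (k + 3) := calc
    Ag (k + 2) ≤ M.lcs (k + 2) :=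
      (hg.lcs_eq_gradedTail (by omega) hkt).ge.trans' (le_gradedTail le_rfl)
    _ ≤ map₂ M.mul ⊤ (M.lcs (k + 1)) := M.lcs_add_two_le_map₂ k
    _ = map₂ M.mul (Ag 1 ⊔ gradedTail Ag 2) (Ag (k + 1) ⊔ gradedTail Ag (k + 2)) := by
      rw [← hg.gradedTail_one (by omega), hg.lcs_eq_gradedTail (by omega) (by omega),
        ← gradedTail_eq_sup, ← gradedTail_eq_sup]
    _ ≤ X ⊔ gradedTail Ag (k + 3) := by
      simp only [map₂_sup_left, map₂_sup_right]
      refine sup_le (sup_le le_sup_left (le_sup_of_le_right ?_))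
        (sup_le (le_sup_of_le_right ?_) (le_sup_of_le_right (tail 2 (k + 2) (by omega))))
      · exact (map₂_le_map₂_right (le_gradedTail (le_refl (k + 1)))).trans
          (tail 2 (k + 1) (by omega))
      · exact (map₂_le_map₂_left (le_gradedTail (le_refl 1))).trans (tail 1 (k + 2) (by omega))
  refine le_antisymm hX (le_of_eq ?_)
  calc Ag (k + 2) = (X ⊔ gradedTail Ag (k + 3)) ⊓ Ag (k + 2) := (inf_eq_right.2 hle).symm
    _ = X ⊔ gradedTail Ag (k + 3) ⊓ Ag (k + 2) := sup_inf_assoc_of_le _ hX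
    _ = X := by rw [(hg.indep.disjoint_gradedTail_succ (k + 2)).symm.eq_bot, sup_bot_eq]

lemma ne_bot_of_lcs_ne_bot (hg : M.IsNaturalGrading t Ag) (h : M.lcs t ≠ ⊥) {k : ℕ}
    (hk : 1 ≤ k) (hkt : k ≤ t) : Ag k ≠ ⊥ := by
  induction hkt using Nat.decreasingInduction with
  | self => rwa [← hg.lcs_eq_top_degree hk]
  | of_succ k hkt ih =>
    intro h0
    apply ih (by omega)
    rw [← hg.map₂_one_eq hk hkt, h0, map₂_bot_right]

lemma finrank_eq_sum [FiniteDimensional ℂ A] (hg : M.IsNaturalGrading t Ag) (ht : 1 ≤ t) :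
    finrank ℂ A = ∑ k ∈ Finset.Ico 1 (t + 1), finrank ℂ (Ag k) := by
  rw [← finrank_top, ← hg.gradedTail_one ht, hg.indep.finrank_gradedTail_eq_sum hg.high_deg]

lemma eq_top_of_one_le (hg : M.IsNaturalGrading t Ag) (ht : 1 ≤ t) {S : Submodule ℂ A}
    (h₁ : Ag 1 ≤ S) (hS : ∀ x ∈ Ag 1, ∀ y ∈ S, M.mul x y ∈ S) : S = ⊤ := by
  have hAg : ∀ k, Ag k ≤ S := by
    intro k
    induction k with
    | zero => simp [hg.zero_deg]
    | succ k ih =>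
      rcases Nat.lt_or_ge k 1 with hk | hk
      · obtain rfl : k = 0 := by omega
        exact h₁
      rcases Nat.lt_or_ge k t with hkt | hkt
      · rw [← hg.map₂_one_eq hk hkt]
        exact Submodule.map₂_le.2 fun x hx y hy => hS x hx y (ih hy)
      · simp [hg.high_deg (k + 1) (by omega)]
  rw [eq_top_iff, ← hg.gradedTail_one ht]
  exact iSup₂_le fun k _ => hAg k

/-- If `s = x ∘ y + y ∘ x ≠ 0`, it spans `A_2`, and `a ∘ s = (a ∘ x) ∘ y` confines
`A_3 = A_1 ∘ A_2` to the line through `s ∘ y`. -/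
lemma mul_add_mul_swap_eq_zero [FiniteDimensional ℂ A] (hg : M.IsNaturalGrading t Ag) (ht : 2 < t)
    (h₂ : finrank ℂ (Ag 2) ≤ 1) (h₃ : 1 < finrank ℂ (Ag 3)) {x y : A} (hx : x ∈ Ag 1)
    (hy : y ∈ Ag 1) : M.mul x y + M.mul y x = 0 := by
  by_contra hs
  have hA₂ : Ag 2 ≤ ℂ ∙ (M.mul x y + M.mul y x) :=
    le_span_singleton_of_finrank_le_one h₂
      (add_mem (hg.mul_mem 1 1 x y hx hy) (hg.mul_mem 1 1 y x hy hx)) hs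
  have hA₃ : Ag 3 ≤ ℂ ∙ M.mul (M.mul x y + M.mul y x) y := by
    rw [← hg.map₂_one_eq (k := 2) (by norm_num) ht]
    refine Submodule.map₂_le.2 fun a ha b hb => ?_
    obtain ⟨μ, rfl⟩ := mem_span_singleton.1 (hA₂ hb)
    obtain ⟨ν, hν⟩ := mem_span_singleton.1 (hA₂ (hg.mul_mem 1 1 a x ha hx))
    have has : M.mul a (M.mul x y + M.mul y x) = ν • M.mul (M.mul x y + M.mul y x) y := by
      rw [map_add, ← M.zinbiel, ← hν, map_smul, LinearMap.smul_apply]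
    rw [map_smul, has, smul_smul]
    exact smul_mem _ _ (mem_span_singleton_self _)
  have := (finrank_mono hA₃).trans (finrank_span_singleton_le_one _)
  omega

lemma exists_le_span_pair_mul_eq_zero [FiniteDimensional ℂ A] (hg : M.IsNaturalGrading t Ag)
    {k : ℕ} (h₁ : finrank ℂ (Ag 1) = 2) (hk : finrank ℂ (Ag k) = 1)
    (hk₁ : finrank ℂ (Ag (k + 1)) ≤ 1) :
    ∃ u ∈ Ag 1, ∃ v ∈ Ag 1, Ag 1 ≤ span ℂ {u, v} ∧ ∀ w ∈ Ag k, M.mul v w = 0 := by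
  obtain ⟨w, hw, hw₀⟩ := exists_mem_ne_zero_of_ne_bot (Submodule.one_le_finrank_iff.1 hk.ge)
  have hmap : (Ag 1).map (M.mul.flip w) ≤ Ag (k + 1) :=
    map_le_iff_le_comap.2 fun x hx => by simpa [add_comm] using hg.mul_mem 1 k x w hx hw
  obtain ⟨u, hu, v, hv, hspan, hvw⟩ :=
    exists_le_span_pair_apply_eq_zero h₁ (M.mul.flip w) ((finrank_mono hmap).trans hk₁)
  refine ⟨u, hu, v, hv, hspan, fun z hz => ?_⟩
  obtain ⟨c, rfl⟩ := mem_span_singleton.1 (le_span_singleton_of_finrank_le_one hk.le hw hw₀ hz)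
  rw [map_smul, ← LinearMap.flip_apply, hvw, smul_zero]

end IsNaturalGrading

lemma IsNaturalGrading.finrank_eq_one_of_typeThree [FiniteDimensional ℂ A]
    (hg : M.IsNaturalGrading 5 Ag) (hA : finrank ℂ A = 7) (h₅ : M.lcs 5 ≠ ⊥)
    (h₁ : finrank ℂ (Ag 1) = 2) (h₃ : finrank ℂ (Ag 3) = 2) :
    finrank ℂ (Ag 2) = 1 ∧ finrank ℂ (Ag 4) = 1 ∧ finrank ℂ (Ag 5) = 1 := by
  have hpos : ∀ k, 1 ≤ k → k ≤ 5 → 1 ≤ finrank ℂ (Ag k) := fun k hk hk₅ =>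
    Submodule.one_le_finrank_iff.2 (hg.ne_bot_of_lcs_ne_bot h₅ hk hk₅)
  have hsum := hg.finrank_eq_sum (by norm_num)
  simp only [Finset.sum_Ico_eq_sum_range, Finset.sum_range_succ, Finset.sum_range_zero,
    Nat.reduceAdd] at hsum
  have := hpos 2; have := hpos 4; have := hpos 5
  omega

def typeThreeTable (e : Fin 7 → A) : Fin 7 → Fin 7 → A :=
  ![![0, e 2, e 3, 0, e 5, e 6, 0],
    ![-e 2, 0, e 4, -e 5, 0, 0, 0],
    ![0, 0, e 5, 0, 0, 0, 0],
    ![0, e 5, (2 : ℂ) • e 6, 0, 0, 0, 0],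
    ![-e 5, 0, 0, 0, 0, 0, 0],
    ![0, 0, 0, 0, 0, 0, 0],
    ![0, 0, 0, 0, 0, 0, 0]]

def typeThreeDegree : Fin 7 → ℕ := ![1, 1, 2, 3, 3, 4, 5]

lemma typeThreeTable_eq_zero (e : Fin 7 → A) {i j : Fin 7}
    (h : 5 < typeThreeDegree i + typeThreeDegree j) : typeThreeTable e i j = 0 := by
  revert h
  fin_cases i <;> fin_cases j <;> simp [typeThreeDegree, typeThreeTable]

lemma typeThreeTable_mem_span (e : Fin 7 → A) (i j : Fin 7) :
    typeThreeTable e i j ∈ span ℂ (Set.range e) := by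
  have he : ∀ k, e k ∈ span ℂ (Set.range e) := fun k => subset_span ⟨k, rfl⟩
  fin_cases i <;> fin_cases j <;> simp [typeThreeTable, he]

lemma mul_eq_typeThreeTable_of_degree_le {u v e₃ e₄ e₅ e₆ e₇ : A} (huu : M.mul u u = 0)
    (hvv : M.mul v v = 0) (h₃ : M.mul u v = e₃) (hvu : M.mul v u = -e₃) (h₄ : M.mul u e₃ = e₄)
    (h₅ : M.mul v e₃ = e₅) (h₆ : M.mul u e₅ = e₆) (h₇ : M.mul u e₆ = e₇) (hv₆ : M.mul v e₆ = 0)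
    {i j : Fin 7} (hij : typeThreeDegree i + typeThreeDegree j ≤ 5) :
    M.mul (![u, v, e₃, e₄, e₅, e₆, e₇] i) (![u, v, e₃, e₄, e₅, e₆, e₇] j) =
      typeThreeTable ![u, v, e₃, e₄, e₅, e₆, e₇] i j := by
  have h₃u : M.mul e₃ u = 0 := by simpa [h₃, hvu] using M.zinbiel u v u
  have h₃v : M.mul e₃ v = 0 := by simpa [h₃, hvv] using M.zinbiel u v v
  have hu₄ : M.mul u e₄ = 0 := by simpa [huu, h₃u, h₄] using (M.zinbiel u u e₃).symm
  have hv₅ : M.mul v e₅ = 0 := by simpa [hvv, h₃v, h₅] using (M.zinbiel v v e₃).symm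
  have h₃₃ : M.mul e₃ e₃ = e₆ := by simpa [h₃, h₅, h₃v, h₆] using M.zinbiel u v e₃
  have hv₄ : M.mul v e₄ = -e₆ := by simpa [hvu, h₄, h₃u, h₃₃] using (M.zinbiel v u e₃).symm
  have h₄u : M.mul e₄ u = 0 := by simpa [h₄, h₃u, hu₄] using M.zinbiel u e₃ u
  have h₄v : M.mul e₄ v = e₆ := by simpa [h₄, h₃v, h₅, h₆] using M.zinbiel u e₃ v
  have h₅u : M.mul e₅ u = -e₆ := by simpa [h₅, h₃u, h₄, hv₄] using M.zinbiel v e₃ u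
  have h₅v : M.mul e₅ v = 0 := by simpa [h₅, h₃v, hv₅] using M.zinbiel v e₃ v
  have h₃₄ : M.mul e₃ e₄ = 0 := by simpa [h₃, hv₄, h₄v] using M.zinbiel u v e₄
  have h₃₅ : M.mul e₃ e₅ = 0 := by simpa [h₃, hv₅, h₅v] using M.zinbiel u v e₅
  have h₆u : M.mul e₆ u = 0 := by simpa [hv₄, h₄u, hu₄] using M.zinbiel v e₄ u
  have h₆v : M.mul e₆ v = 0 := by simpa [hv₄, h₄v] using M.zinbiel v e₄ v
  have h₄₃ : M.mul e₄ e₃ = (2 : ℂ) • e₇ := by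
    simpa [two_smul, h₄, h₃₃, h₇] using M.zinbiel u e₃ e₃
  have h₅₃ : M.mul e₅ e₃ = 0 := by simpa [h₅, h₃₃, hv₆] using M.zinbiel v e₃ e₃
  revert hij
  fin_cases i <;> fin_cases j <;> simp [typeThreeDegree, typeThreeTable, *]

def typeThreeFamily (M : ZinbielStr A) (u v : A) : Fin 7 → A :=
  ![u, v, M.mul u v, M.mul u (M.mul u v), M.mul v (M.mul u v), M.mul u (M.mul v (M.mul u v)),
    M.mul u (M.mul u (M.mul v (M.mul u v)))]

namespace IsNaturalGrading

lemma typeThreeFamily_mem (hg : M.IsNaturalGrading t Ag) {u v : A} (hu : u ∈ Ag 1)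
    (hv : v ∈ Ag 1) (i : Fin 7) : typeThreeFamily M u v i ∈ Ag (typeThreeDegree i) := by
  have h₃ := hg.mul_mem 1 1 _ _ hu hv
  have h₄ := hg.mul_mem 1 2 _ _ hu h₃
  have h₅ := hg.mul_mem 1 2 _ _ hv h₃
  have h₆ := hg.mul_mem 1 3 _ _ hu h₅
  have h₇ := hg.mul_mem 1 4 _ _ hu h₆
  fin_cases i
  exacts [hu, hv, h₃, h₄, h₅, h₆, h₇]

lemma mul_typeThreeFamily (hg : M.IsNaturalGrading 5 Ag) {u v : A} (hu : u ∈ Ag 1)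
    (hv : v ∈ Ag 1) (hanti : ∀ x ∈ Ag 1, ∀ y ∈ Ag 1, M.mul x y + M.mul y x = 0)
    (hv₄ : ∀ w ∈ Ag 4, M.mul v w = 0) (i j : Fin 7) :
    M.mul (typeThreeFamily M u v i) (typeThreeFamily M u v j) =
      typeThreeTable (typeThreeFamily M u v) i j := by
  have hsq : ∀ x ∈ Ag 1, M.mul x x = 0 := fun x hx => by
    simpa [← two_smul ℂ] using hanti x hx x hx
  rcases le_or_gt (typeThreeDegree i + typeThreeDegree j) 5 with hij | hij
  · exact mul_eq_typeThreeTable_of_degree_le (hsq u hu) (hsq v hv) rfl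
      (eq_neg_of_add_eq_zero_left (hanti v hv u hu)) rfl rfl rfl rfl
      (hv₄ _ (hg.typeThreeFamily_mem hu hv 5)) hij
  · rw [typeThreeTable_eq_zero _ hij]
    exact hg.mul_eq_zero_of_lt (hg.typeThreeFamily_mem hu hv i) (hg.typeThreeFamily_mem hu hv j) hij

end IsNaturalGrading

/-- Every 7-dimensional naturally graded quasi-filiform complex Zinbiel
algebra of type `A_(3)` is isomorphic to a single explicit algebra. -/
theorem dim7_type_three_classification {A : Type*} [AddCommGroup A] [Module ℂ A]
    [FiniteDimensional ℂ A] (M : ZinbielStr A)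
    (Ag : ℕ → Submodule ℂ A)
    (hqf : M.IsQuasiFiliform 7) (hg : M.IsNaturalGrading 5 Ag)
    (h1 : Module.finrank ℂ (Ag 1) = 2) (h2 : Module.finrank ℂ (Ag 3) = 2) :
    ∃ e : Module.Basis (Fin 7) ℂ A, ∀ i j : Fin 7,
      M.mul (e i) (e j) =
        ![![0, e 2, e 3, 0, e 5, e 6, 0],
           ![-e 2, 0, e 4, -e 5, 0, 0, 0],
           ![0, 0, e 5, 0, 0, 0, 0],
           ![0, e 5, (2 : ℂ) • e 6, 0, 0, 0, 0],
           ![-e 5, 0, 0, 0, 0, 0, 0],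
           ![0, 0, 0, 0, 0, 0, 0],
           ![0, 0, 0, 0, 0, 0, 0]] i j := by
  obtain ⟨hA, h₅, -⟩ := hqf
  obtain ⟨hr₂, hr₄, hr₅⟩ := hg.finrank_eq_one_of_typeThree hA h₅ h1 h2
  have hanti : ∀ x ∈ Ag 1, ∀ y ∈ Ag 1, M.mul x y + M.mul y x = 0 := fun x hx y hy =>
    hg.mul_add_mul_swap_eq_zero (by norm_num) hr₂.le (by omega) hx hy
  obtain ⟨u, hu, v, hv, hspan, hv₄⟩ := hg.exists_le_span_pair_mul_eq_zero h1 hr₄ hr₅.le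
  set e := typeThreeFamily M u v
  have htable := hg.mul_typeThreeFamily hu hv hanti hv₄
  have hsub : Ag 1 ≤ span ℂ (Set.range e) :=
    hspan.trans (span_mono (Set.insert_subset ⟨0, rfl⟩ (Set.singleton_subset_iff.2 ⟨1, rfl⟩)))
  have htop : span ℂ (Set.range e) = ⊤ :=
    hg.eq_top_of_one_le (by norm_num) hsub fun x hx y hy =>
      mul_mem_span_range (fun i j => htable i j ▸ typeThreeTable_mem_span e i j) (hsub hx) hy
  refine ⟨basisOfTopLeSpanOfCardEqFinrank e htop.ge (by simp [hA]), fun i j => ?_⟩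
  rw [coe_basisOfTopLeSpanOfCardEqFinrank]
  exact htable i j

end ZinbielStr
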